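/- arXiv:1906.11174 — 7 statements merged into one kernel-verified Lean document; each statement's English description precedes it below -/
import Mathlib

section
/- Let X be a set with at most (q^{n+1} − q)/(q − 1) elements, and let f₁, …, f_k : X → F_q be functions with k > n. Then there exist g₁, …, g_n in the F_q-linear span of f₁, …, f_k such that the set of common zeros of g₁, …, g_n equals the set of common zeros of f₁, …, f_k. -/
/-- A matrix is in reduced row echelon form: every row is either zero, or has a
leading entry `1` such that all entries to its left in that row are zero, all other
entries in its column are zero, and every later row vanishes at that column and to
its left (so pivots strictly increase and zero rows are at the bottom). -/
def IsRREF {K : Type*} [Field K] {m n : ℕ} (M : Matrix (Fin m) (Fin n) K) : Prop :=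
  ∀ i : Fin m, (∀ j, M i j = 0) ∨
    ∃ j : Fin n, M i j = 1 ∧ (∀ j', j' < j → M i j' = 0) ∧
      (∀ i', i' ≠ i → M i' j = 0) ∧
      (∀ i', i < i' → ∀ j', j' ≤ j → M i' j' = 0)

open Finset

private lemma card_fiber_mul' {F : Type*} [Field F] {V : Type*} [AddCommGroup V]
    [Module F V] (φ : V →ₗ[F] F) (g₁ : V) (hg₁ : φ g₁ = 1) :
    Nat.card V = Nat.card {g : V // φ g = 0} * Nat.card F := by
  classical
  have e : V ≃ {g : V // φ g = 0} × F :=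
  { toFun := fun g => (⟨g - φ g • g₁, by simp [hg₁]⟩, φ g)
    invFun := fun p => p.1.1 + p.2 • g₁
    left_inv := fun g => by simp
    right_inv := fun p => by
      obtain ⟨⟨h, hh⟩, a⟩ := p
      have key : φ (h + a • g₁) = a := by simp [hh, hg₁]
      simp [Prod.ext_iff, Subtype.ext_iff, key] }
  rw [Nat.card_congr e, Nat.card_prod]

private lemma step_lemma {F X : Type*} [Field F] [Fintype F] [DecidableEq F] [Fintype X] {k : ℕ}
    (f : Fin k → X → F) (S : Finset X) (hS : ∀ x ∈ S, ∃ j, f j x ≠ 0) (B : ℕ)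
    (hcard : S.card ≤ Fintype.card F * (B + 1)) :
    ∃ g ∈ Submodule.span F (Set.range f),
      (S.filter fun x => g x = 0).card ≤ B := by
  classical
  set q := Fintype.card F with hqdef
  have hq : 2 ≤ q := Fintype.one_lt_card
  set V := Submodule.span F (Set.range f) with hV
  have hfin : Fintype ↥V := Fintype.ofFinite _
  obtain ⟨g₀, -, hmin⟩ := Finset.exists_min_image (univ : Finset ↥V)
      (fun g => (S.filter fun x => (g : X → F) x = 0).card) ⟨0, mem_univ 0⟩
  refine ⟨(g₀ : X → F), g₀.2, ?_⟩
  set M := (S.filter fun x => (g₀ : X → F) x = 0).card with hM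
  set N := Fintype.card ↥V with hNdef
  -- per-point fiber count
  have hfiber : ∀ x ∈ S,
      (univ.filter fun g : ↥V => (g : X → F) x = 0).card * q = N := by
    intro x hx
    obtain ⟨j, hj⟩ := hS x hx
    set φ : ↥V →ₗ[F] F := (LinearMap.proj x).comp V.subtype with hφ
    have hsub : f j ∈ V := Submodule.subset_span (Set.mem_range_self j)
    have hg₁ : φ ((f j x)⁻¹ • (⟨f j, hsub⟩ : ↥V)) = 1 := by
      simp [hφ, inv_mul_cancel₀ hj]
    have hcf := card_fiber_mul' φ _ hg₁
    have h1 : Nat.card ↥V = N := Nat.card_eq_fintype_card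
    have h2 : Nat.card F = q := Nat.card_eq_fintype_card
    have h3 : Nat.card {g : ↥V // φ g = 0}
        = (univ.filter fun g : ↥V => (g : X → F) x = 0).card := by
      rw [Nat.card_eq_fintype_card, Fintype.card_subtype]
      congr 1
    rw [h1, h2, h3] at hcf
    omega
  -- double counting
  have hsum : (∑ g : ↥V, (S.filter fun x => (g : X → F) x = 0).card) * q
      = S.card * N := by
    have : (∑ g : ↥V, (S.filter fun x => (g : X → F) x = 0).card)
        = ∑ x ∈ S, (univ.filter fun g : ↥V => (g : X → F) x = 0).card := by
      simp only [Finset.card_filter]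
      rw [Finset.sum_comm]
    rw [this, Finset.sum_mul]
    rw [Finset.sum_congr rfl hfiber]
    simp [mul_comm]
  -- lower bound on the sum
  have hlow : S.card + (N - 1) * M ≤ ∑ g : ↥V, (S.filter fun x => (g : X → F) x = 0).card := by
    have h0 : (S.filter fun x => ((0 : ↥V) : X → F) x = 0).card = S.card := by
      simp
    rw [← Finset.add_sum_erase _ _ (mem_univ (0 : ↥V)), h0]
    gcongr
    · calc (N - 1) * M = ∑ _g ∈ (univ : Finset ↥V).erase 0, M := by
            rw [Finset.sum_const, smul_eq_mul, Finset.card_erase_of_mem (mem_univ _)]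
            simp [hNdef]
        _ ≤ ∑ g ∈ (univ : Finset ↥V).erase 0, (S.filter fun x => (g : X → F) x = 0).card := by
            exact Finset.sum_le_sum fun g _ => hmin g (mem_univ g)
  have hMs : M ≤ S.card := Finset.card_filter_le _ _
  have hN1 : 1 ≤ N := Fintype.card_pos
  -- arithmetic
  by_contra hBM
  push_neg at hBM
  have hkey : (S.card + (N - 1) * M) * q ≤ S.card * N :=
    hsum ▸ Nat.mul_le_mul_right q hlow
  obtain ⟨N', hN'⟩ : ∃ N', N = N' + 1 := ⟨N - 1, by omega⟩
  rw [hN'] at hkey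
  simp only [Nat.add_sub_cancel] at hkey
  have hBM' : B + 1 ≤ M := hBM
  have h2 : S.card ≤ q * M := hcard.trans (Nat.mul_le_mul_left q hBM')
  nlinarith [hkey, h2, hMs, hq, hBM']

private lemma key_induction {F X : Type*} [Field F] [Fintype F] [DecidableEq F] [Fintype X]
    {k : ℕ} (f : Fin k → X → F) :
    ∀ m : ℕ, ∀ S : Finset X, (∀ x ∈ S, ∃ j, f j x ≠ 0) →
      S.card ≤ (∑ i ∈ Finset.range m, Fintype.card F ^ (i + 1)) →
      ∃ g : Fin m → X → F, (∀ i, g i ∈ Submodule.span F (Set.range f)) ∧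
        ∀ x ∈ S, ∃ i, g i x ≠ 0 := by
  intro m
  induction m with
  | zero =>
      intro S hS hcard
      simp only [Finset.range_zero, Finset.sum_empty, Nat.le_zero, Finset.card_eq_zero] at hcard
      exact ⟨fun _ => 0, fun i => Submodule.zero_mem _,
        fun x hx => by simp [hcard] at hx⟩
  | succ m ih =>
      intro S hS hcard
      have hB : (∑ i ∈ Finset.range (m + 1), Fintype.card F ^ (i + 1))
          = Fintype.card F * ((∑ i ∈ Finset.range m, Fintype.card F ^ (i + 1)) + 1) := by
        rw [Finset.sum_range_succ']
        simp only [pow_succ, pow_zero, one_mul]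
        rw [← Finset.sum_mul]
        ring
      rw [hB] at hcard
      obtain ⟨g₀, hg₀V, hg₀⟩ := step_lemma f S hS _ hcard
      set S' := S.filter fun x => g₀ x = 0 with hS'
      obtain ⟨g', hg'V, hg'⟩ := ih S' (fun x hx => hS x (Finset.mem_of_mem_filter x hx)) hg₀
      refine ⟨Fin.cases g₀ g', fun i => ?_, fun x hx => ?_⟩
      · exact Fin.cases hg₀V hg'V i
      · by_cases h0 : g₀ x = 0
        · obtain ⟨i, hi⟩ := hg' x (Finset.mem_filter.mpr ⟨hx, h0⟩)
          exact ⟨i.succ, hi⟩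
        · exact ⟨0, h0⟩

private lemma geom_eval (q : ℕ) (hq : 1 ≤ q) (m : ℕ) :
    (∑ i ∈ Finset.range m, q ^ (i + 1)) * (q - 1) + q = q ^ (m + 1) := by
  obtain ⟨r, rfl⟩ : ∃ r, q = r + 1 := ⟨q - 1, by omega⟩
  simp only [Nat.add_sub_cancel]
  induction m with
  | zero => simp
  | succ m ih =>
      have hB : (∑ i ∈ Finset.range (m + 1), (r + 1) ^ (i + 1))
          = (r + 1) * ((∑ i ∈ Finset.range m, (r + 1) ^ (i + 1)) + 1) := by
        rw [Finset.sum_range_succ']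
        simp only [pow_succ, pow_zero, one_mul]
        rw [← Finset.sum_mul]
        ring
      rw [hB]
      have : (r + 1) * ((∑ i ∈ Finset.range m, (r + 1) ^ (i + 1)) + 1) * r + (r + 1)
          = (r + 1) * ((∑ i ∈ Finset.range m, (r + 1) ^ (i + 1)) * r + (r + 1)) := by ring
      rw [this, ih, ← pow_succ']

theorem stmt_4 {F : Type*} [Field F] [Fintype F] (n : ℕ) (hn : 0 < n)
    (X : Type*) [Fintype X]
    (hX : Fintype.card X * (Fintype.card F - 1) ≤
      Fintype.card F ^ (n + 1) - Fintype.card F)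
    (k : ℕ) (hk : n < k) (f : Fin k → X → F) :
    ∃ g : Fin n → X → F,
      (∀ i, g i ∈ Submodule.span F (Set.range f)) ∧
        {x : X | ∀ i, g i x = 0} = {x : X | ∀ i, f i x = 0} := by
  classical
  set q := Fintype.card F with hqdef
  have hq2 : 2 ≤ q := Fintype.one_lt_card
  have hgeom := geom_eval q (by omega) n
  have hsub : q ^ (n + 1) - q = (∑ i ∈ Finset.range n, q ^ (i + 1)) * (q - 1) :=
    Nat.sub_eq_of_eq_add hgeom.symm
  rw [hsub] at hX
  have hXB : Fintype.card X ≤ ∑ i ∈ Finset.range n, q ^ (i + 1) :=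
    Nat.le_of_mul_le_mul_right hX (by omega)
  set S := Finset.univ.filter (fun x : X => ∃ j, f j x ≠ 0) with hSdef
  have hScard : S.card ≤ ∑ i ∈ Finset.range n, q ^ (i + 1) :=
    le_trans (le_trans (Finset.card_filter_le _ _) (le_of_eq (Finset.card_univ))) hXB
  obtain ⟨g, hgV, hg⟩ := key_induction f n S
    (fun x hx => (Finset.mem_filter.mp hx).2) hScard
  refine ⟨g, hgV, ?_⟩
  ext x
  simp only [Set.mem_setOf_eq]
  constructor
  · intro h j
    by_contra hj
    obtain ⟨i, hi⟩ := hg x (Finset.mem_filter.mpr ⟨Finset.mem_univ x, ⟨j, hj⟩⟩)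
    exact hi (h i)
  · intro h i
    have hle : Submodule.span F (Set.range f)
        ≤ LinearMap.ker (LinearMap.proj x : (X → F) →ₗ[F] F) := by
      rw [Submodule.span_le]
      rintro _ ⟨j, rfl⟩
      exact h j
    exact hle (hgV i)
end

section
/- Let X be a set with at most (q^{n+1} − q)/(q − 1) elements and f₁, …, f_{n+1} : X → F_q functions. Then there exists a matrix M ∈ M_{n,n+1}(F_q) such that the functions g₁, …, g_n defined by (g₁, …, g_n)ᵀ = M(f₁, …, f_{n+1})ᵀ satisfy Z(g₁, …, g_n) = Z(f₁, …, f_{n+1}). -/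
theorem stmt_5 {F : Type*} [Field F] [Fintype F] (n : ℕ) (hn : 0 < n)
    (X : Type*) [Fintype X]
    (hX : Fintype.card X * (Fintype.card F - 1) ≤
      Fintype.card F ^ (n + 1) - Fintype.card F)
    (f : Fin (n + 1) → X → F) :
    ∃ M : Matrix (Fin n) (Fin (n + 1)) F,
      {x : X | ∀ i : Fin n, ∑ j : Fin (n + 1), M i j * f j x = 0} =
        {x : X | ∀ j : Fin (n + 1), f j x = 0} := by
  classical
  have hq2 : 2 ≤ Fintype.card F := Fintype.one_lt_card
  -- the set of "bad" vectors: nonzero multiples of some value vector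
  set bad : Finset (Fin (n + 1) → F) :=
    Finset.univ.biUnion fun x : X =>
      (Finset.univ \ {(0 : F)}).image fun c : F => c • fun k => f k x with hbad
  have hcard_bad : bad.card ≤ Fintype.card X * (Fintype.card F - 1) := by
    refine le_trans (Finset.card_biUnion_le) ?_
    refine le_trans (Finset.sum_le_card_nsmul _ _ (Fintype.card F - 1) ?_) ?_
    · intro x _
      refine le_trans (Finset.card_image_le) ?_
      rw [Finset.card_sdiff_of_subset (by simp), Finset.card_singleton, Finset.card_univ]
    · simp [mul_comm]
  have hQle : Fintype.card F + 1 ≤ Fintype.card F ^ (n + 1) := by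
    have h1 : Fintype.card F * 2 ≤ Fintype.card F * Fintype.card F :=
      Nat.mul_le_mul_left _ hq2
    have h2 : Fintype.card F * Fintype.card F ≤ Fintype.card F ^ (n + 1) := by
      calc Fintype.card F * Fintype.card F = Fintype.card F ^ 2 := (sq _).symm
      _ ≤ Fintype.card F ^ (n + 1) := Nat.pow_le_pow_right (by omega) (by omega)
    omega
  have h2 : Fintype.card (Fin (n + 1) → F) = Fintype.card F ^ (n + 1) := by simp
  obtain ⟨v, hvbad, hvne⟩ : ∃ v : Fin (n + 1) → F, v ∉ bad ∧ v ≠ 0 := by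
    by_contra hcon
    push_neg at hcon
    have hsub : (Finset.univ : Finset (Fin (n + 1) → F)) ⊆ bad ∪ {0} := by
      intro v _
      by_cases hvb : v ∈ bad
      · exact Finset.mem_union.mpr (Or.inl hvb)
      · exact Finset.mem_union.mpr (Or.inr (by simp [hcon v hvb]))
    have h1 : (Finset.univ : Finset (Fin (n + 1) → F)).card ≤ (bad ∪ {0}).card :=
      Finset.card_le_card hsub
    have h3 : (bad ∪ ({0} : Finset (Fin (n + 1) → F))).card ≤ bad.card + 1 :=
      le_trans (Finset.card_union_le _ _) (by simp)
    rw [Finset.card_univ, h2] at h1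
    omega
  obtain ⟨j, hj⟩ : ∃ j, v j ≠ 0 := by
    by_contra h
    push_neg at h
    exact hvne (funext h)
  -- normalize
  set w : Fin (n + 1) → F := (v j)⁻¹ • v with hw
  have hwj : w j = 1 := by simp [hw, inv_mul_cancel₀ hj]
  have hvw : ∀ k, v k = v j * w k := by
    intro k
    simp only [hw, Pi.smul_apply, smul_eq_mul]
    field_simp
  -- the matrix
  refine ⟨fun i k => (if k = j.succAbove i then 1 else 0)
      - (if k = j then w (j.succAbove i) else 0), ?_⟩
  have hsum : ∀ (i : Fin n) (x : X),
      (∑ k : Fin (n + 1), ((if k = j.succAbove i then (1:F) else 0)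
        - (if k = j then w (j.succAbove i) else 0)) * f k x)
      = f (j.succAbove i) x - w (j.succAbove i) * f j x := by
    intro i x
    simp [sub_mul, ite_mul, Finset.sum_sub_distrib]
  ext x
  simp only [Set.mem_setOf_eq]
  constructor
  · intro h
    have hall : ∀ k, f k x = w k * f j x := by
      intro k
      rcases eq_or_ne k j with rfl | hk
      · rw [hwj, one_mul]
      · obtain ⟨i, rfl⟩ := Fin.exists_succAbove_eq hk
        have := h i
        rw [hsum] at this
        exact sub_eq_zero.mp this
    rcases eq_or_ne (f j x) 0 with hfj | hfj
    · intro k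
      rw [hall k, hfj, mul_zero]
    · exfalso
      apply hvbad
      rw [hbad, Finset.mem_biUnion]
      refine ⟨x, Finset.mem_univ x, ?_⟩
      rw [Finset.mem_image]
      refine ⟨v j * (f j x)⁻¹, ?_, ?_⟩
      · simp [hj, hfj]
      · funext k
        simp only [Pi.smul_apply, smul_eq_mul]
        rw [hall k, hvw k]
        field_simp
  · intro h i
    rw [hsum, h, h, mul_zero, sub_zero]
end

section
/- Let X_n be a set of representatives of homogeneous coordinates, one for each point of P^n(F_q), and let f_i : X_n → F_q (for i = 1, …, n+1) pick out the i-th coordinate. Then Z(f₁, …, f_{n+1}) = ∅, but for any g₁, …, g_n in the F_q-span of f₁, …, f_{n+1}, the set Z(g₁, …, g_n) is nonempty. -/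
theorem stmt_7 {F : Type*} [Field F] [Fintype F] (n : ℕ) (hn : 0 < n)
    (c : Projectivization F (Fin (n + 1) → F) → (Fin (n + 1) → F))
    (hc0 : ∀ P, c P ≠ 0)
    (hc : ∀ P, Projectivization.mk F (c P) (hc0 P) = P) :
    {P : Projectivization F (Fin (n + 1) → F) | ∀ i : Fin (n + 1), c P i = 0} = ∅ ∧
      ∀ g : Fin n → (Projectivization F (Fin (n + 1) → F) → F),
        (∀ i, g i ∈ Submodule.span F
          (Set.range fun j : Fin (n + 1) => fun P => c P j)) →
        ∃ P, ∀ i, g i P = 0 := by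
  constructor
  · ext P
    simp only [Set.mem_setOf_eq, Set.mem_empty_iff_false, iff_false]
    intro h
    exact hc0 P (funext h)
  · intro g hg
    -- express each g i as a linear combination
    have hrep : ∀ i, ∃ a : Fin (n + 1) → F, ∀ P, g i P = ∑ j, a j * c P j := by
      intro i
      obtain ⟨a, ha⟩ := (Finsupp.mem_span_range_iff_exists_finsupp).1 (hg i)
      refine ⟨fun j => a j, fun P => ?_⟩
      have := congrFun ha P
      rw [← this, Finsupp.sum_fintype _ _ (fun j => by simp), Finset.sum_apply]
      exact Finset.sum_congr rfl fun j _ => by simp [mul_comm]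
    choose a ha using hrep
    -- linear map with nontrivial kernel
    let φ : (Fin (n + 1) → F) →ₗ[F] (Fin n → F) :=
      { toFun := fun v i => ∑ j, a i j * v j
        map_add' := by
          intro v w; funext i; simp [mul_add, Finset.sum_add_distrib]
        map_smul' := by
          intro r v; funext i; simp [Finset.mul_sum]; ring_nf
          exact Finset.sum_congr rfl fun j _ => by ring }
    have hker : LinearMap.ker φ ≠ ⊥ := by
      apply LinearMap.ker_ne_bot_of_finrank_lt
      simp [Module.finrank_pi]
    obtain ⟨v, hv, hv0⟩ := Submodule.exists_mem_ne_zero_of_ne_bot hker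
    refine ⟨Projectivization.mk F v hv0, fun i => ?_⟩
    set P := Projectivization.mk F v hv0
    obtain ⟨u, hu⟩ := (Projectivization.mk_eq_mk_iff' F (c P) v (hc0 P) hv0).1 (hc P)
    have hφv : φ v = 0 := LinearMap.mem_ker.1 hv
    have : φ (c P) = 0 := by rw [← hu, map_smul, hφv, smul_zero]
    have := congrFun this i
    rw [ha i P]
    exact this
end

section
/- Let V be a finite-dimensional F_q-vector space of functions on the affine space A^n(F_q) (i.e., V is the image of a linear map φ : F → Map(F_q^n, F_q)). Any algebraic set defined as the common zero locus of the images under φ of finitely many elements of F can be defined as the common zero locus of the images of at most n elements of F, each an F_q-linear combination of the originals. -/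
open Module Submodule Set

theorem exists_ne_zero_forall_notMem_span_singleton (F : Type*) {E X : Type*} [Field F]
    [Finite F] [AddCommGroup E] [Module F E] [Finite E] [Finite X] (v : X → E)
    (h : Nat.card X * (Nat.card F - 1) + 1 < Nat.card E) :
    ∃ w : E, w ≠ 0 ∧ ∀ x, w ∉ F ∙ v x := by
  classical
  have := Fintype.ofFinite F
  have := Fintype.ofFinite E
  have := Fintype.ofFinite X
  let punctured (x : X) : Finset E := ({0}ᶜ : Finset F).image (· • v x)
  let lines : Finset E := insert 0 (Finset.univ.biUnion punctured)
  have mem_lines (x : X) : (F ∙ v x : Set E) ⊆ lines := by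
    rintro _ hw
    obtain ⟨c, rfl⟩ := mem_span_singleton.mp hw
    by_cases hc : c = 0
    · simp [lines, hc]
    · refine Finset.mem_insert_of_mem (Finset.mem_biUnion.mpr ⟨x, Finset.mem_univ _, ?_⟩)
      exact Finset.mem_image_of_mem _ (by simpa using hc)
  have card_lines : lines.card < (Finset.univ : Finset E).card :=
    calc lines.card ≤ (Finset.univ.biUnion punctured).card + 1 := Finset.card_insert_le _ _
      _ ≤ ∑ x, (punctured x).card + 1 := by gcongr; exact Finset.card_biUnion_le
      _ ≤ ∑ _x : X, (Nat.card F - 1) + 1 := by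
        gcongr
        exact Finset.card_image_le.trans (by simp [Finset.card_compl, Nat.card_eq_fintype_card])
      _ < (Finset.univ : Finset E).card := by
        simpa [Nat.card_eq_fintype_card] using h
  obtain ⟨w, -, hw⟩ := Finset.exists_mem_notMem_of_card_lt_card card_lines
  exact ⟨w, fun h0 => hw (h0 ▸ Finset.mem_insert_self _ _),
    fun x hx => hw (mem_lines x hx)⟩

theorem Submodule.exists_fin_span_range_eq_of_finrank_le {K M : Type*} [DivisionRing K]
    [AddCommGroup M] [Module K M] (U : Submodule K M) [FiniteDimensional K U] {n : ℕ}
    (h : finrank K U ≤ n) : ∃ g : Fin n → M, span K (Set.range g) = U := by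
  let b := finBasis K U
  have hspan : span K (Set.range ((↑) ∘ b : _ → M)) = U := by
    rw [range_comp, ← U.coe_subtype, span_image, b.span_eq, map_subtype_top]
  refine ⟨fun i => if hi : (i : ℕ) < finrank K U then (b ⟨i, hi⟩ : M) else 0,
    le_antisymm (span_le.mpr ?_) (hspan.ge.trans (span_mono ?_))⟩
  · rintro _ ⟨i, rfl⟩
    dsimp only
    split_ifs
    exacts [(b _).2, U.zero_mem]
  · rintro _ ⟨j, rfl⟩
    exact ⟨⟨j, j.2.trans_le h⟩, by simp⟩

theorem card_mul_pred_add_one_lt_pow {a q n m : ℕ} (hq : 1 < q) (hn : 0 < n) (hnm : n < m)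
    (ha : a ≤ q ^ n) : a * (q - 1) + 1 < q ^ m :=
  calc a * (q - 1) + 1 ≤ q ^ n * (q - 1) + 1 := by gcongr
    _ < q ^ n * (q - 1) + q ^ n := by have := Nat.one_lt_pow hn.ne' hq; omega
    _ = q ^ (n + 1) := by rw [pow_succ, ← Nat.mul_add_one, Nat.sub_add_cancel hq.le]
    _ ≤ q ^ m := Nat.pow_le_pow_right (by omega) hnm

namespace LinearMap

variable {F V X : Type*} [Field F] [AddCommGroup V] [Module F V] (φ : V →ₗ[F] X → F)

def zeroLocus (S : Set V) : Set X := {x | ∀ v ∈ S, φ v x = 0}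

theorem zeroLocus_range {ι : Type*} (g : ι → V) :
    φ.zeroLocus (Set.range g) = {x | ∀ i, φ (g i) x = 0} := by
  simp [zeroLocus]

theorem zeroLocus_anti {S T : Set V} (h : S ⊆ T) : φ.zeroLocus T ⊆ φ.zeroLocus S :=
  fun _ hx v hv => hx v (h hv)

theorem zeroLocus_span (S : Set V) : φ.zeroLocus (span F S) = φ.zeroLocus S := by
  refine (φ.zeroLocus_anti subset_span).antisymm fun x hx => ?_
  have : span F S ≤ ker (proj x ∘ₗ φ) := span_le.mpr hx
  exact fun v hv => this hv

theorem exists_lt_zeroLocus_eq [Finite F] [Finite X] (U : Submodule F V)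
    [FiniteDimensional F U] (h : Nat.card X * (Nat.card F - 1) + 1 < Nat.card F ^ finrank F U) :
    ∃ U' < U, φ.zeroLocus U' = φ.zeroLocus U := by
  let ev (x : X) : Dual F U := proj x ∘ₗ φ ∘ₗ U.subtype
  have : Finite (Dual F U) := Module.finite_of_finite F
  obtain ⟨μ, hμ0, hμ⟩ := exists_ne_zero_forall_notMem_span_singleton F ev
    (by rwa [natCard_eq_pow_finrank (K := F) (V := Dual F U), Subspace.dual_finrank_eq])
  have hker : ker μ < ⊤ := lt_top_iff_ne_top.mpr (mt ker_eq_top.mp hμ0)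
  refine ⟨(ker μ).map U.subtype,
    by simpa using map_strictMono_of_injective U.injective_subtype hker,
    subset_antisymm (fun x hx => ?_) (φ.zeroLocus_anti (map_subtype_le U _))⟩
  have hev : ker μ ≤ ker (ev x) := fun u hu => hx _ (mem_map_of_mem hu)
  obtain ⟨c, hc⟩ := mem_span_singleton.mp
    (by simpa using mem_span_of_iInf_ker_le_ker (L := fun _ : Unit => μ) (by simpa using hev))
  by_cases hc0 : c = 0
  · intro v hv
    simpa [hc0, ev] using (LinearMap.congr_fun hc ⟨v, hv⟩).symm
  · refine absurd ?_ (hμ x)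
    rw [show μ = c⁻¹ • ev x by rw [← hc, inv_smul_smul₀ hc0]]
    exact smul_mem _ _ (mem_span_singleton_self _)

theorem exists_le_finrank_le_zeroLocus_eq [Finite F] [Finite X] {n : ℕ} (hn : 0 < n)
    (hX : Nat.card X ≤ Nat.card F ^ n) (U : Submodule F V) [FiniteDimensional F U] :
    ∃ U' ≤ U, finrank F U' ≤ n ∧ φ.zeroLocus U' = φ.zeroLocus U := by
  induction hm : finrank F U using Nat.strong_induction_on generalizing U with
  | _ m ih =>
  by_cases hmn : m ≤ n
  · exact ⟨U, le_rfl, hm ▸ hmn, rfl⟩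
  obtain ⟨U₁, hlt, hZ⟩ := φ.exists_lt_zeroLocus_eq U
    (hm ▸ card_mul_pred_add_one_lt_pow Finite.one_lt_card hn (by omega) hX)
  have : FiniteDimensional F U₁ := finiteDimensional_of_le hlt.le
  obtain ⟨U₂, hle, hrank, hZ₂⟩ := ih _ (hm ▸ finrank_lt_finrank_of_lt hlt) U₁ rfl
  exact ⟨U₂, hle.trans hlt.le, hrank, hZ₂.trans hZ⟩

end LinearMap

theorem stmt_9 {F : Type*} [Field F] [Fintype F] (n : ℕ) (hn : 0 < n)
    (V : Type*) [AddCommGroup V] [Module F V]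
    (φ : V →ₗ[F] ((Fin n → F) → F)) (k : ℕ) (f : Fin k → V) :
    ∃ g : Fin n → V,
      (∀ i, g i ∈ Submodule.span F (Set.range f)) ∧
        {x : Fin n → F | ∀ i, φ (g i) x = 0} =
          {x : Fin n → F | ∀ i, φ (f i) x = 0} := by
  have := FiniteDimensional.span_of_finite F (finite_range f)
  obtain ⟨U, hU, hrank, hZ⟩ :=
    φ.exists_le_finrank_le_zeroLocus_eq hn (by simp) (span F (range f))
  have := finiteDimensional_of_le hU
  obtain ⟨g, hg⟩ := U.exists_fin_span_range_eq_of_finrank_le hrank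
  refine ⟨g, fun i => hU (hg ▸ subset_span ⟨i, rfl⟩), ?_⟩
  rw [← φ.zeroLocus_range, ← φ.zeroLocus_range, ← φ.zeroLocus_span, hg, hZ,
    φ.zeroLocus_span]
end

section
/- Any system of k > n quadratic forms in n variables over F_q can be replaced by a system of at most n quadratic forms, each an F_q-linear combination of the original forms, having the same zero locus in A^n(F_q). -/
/-!
A combination `∑ t, c t • f t` vanishes at `x` iff `c ⬝ᵥ v x = 0`, where `v x = (f t x)_t`, and
for `v x ≠ 0` exactly a `1 / q` fraction of all `c` satisfy this. Averaging over `c`, some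
combination vanishes at no more than a `1 / q` fraction of the points outside the common zero
locus. Since `0` is a common zero, fewer than `q ^ n` points lie outside the locus, so after `n`
iterations none is left.
-/

open Finset Matrix MvPolynomial

section DotProductAveraging

variable {K ι α : Type*} [Field K] [Fintype K] [Fintype ι]

lemma card_filter_dotProduct_eq_zero_mul_card [DecidableEq ι] [DecidableEq K] {w : ι → K}
    (hw : w ≠ 0) :
    #{c : ι → K | c ⬝ᵥ w = 0} * Fintype.card K = Fintype.card K ^ Fintype.card ι := by
  let φ : (ι → K) →+ K := AddMonoidHom.mk' (· ⬝ᵥ w) fun a b => add_dotProduct a b w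
  have hφ : Function.Surjective φ := by
    obtain ⟨i, hi⟩ := Function.ne_iff.mp hw
    intro t
    refine ⟨Pi.single i (t / w i), ?_⟩
    simp [φ, single_dotProduct, div_mul_cancel₀ t hi]
  have h := φ.ker.card_mul_index
  rw [AddSubgroup.index_ker, AddMonoidHom.range_eq_top.mpr hφ, AddSubgroup.card_top] at h
  simpa [Nat.card_eq_fintype_card, ← Fintype.card_subtype, φ] using h

lemma exists_card_filter_dotProduct_eq_zero_mul_card_le [DecidableEq K] (S : Finset α)
    (v : α → ι → K) (hv : ∀ x ∈ S, v x ≠ 0) :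
    ∃ c : ι → K, #{x ∈ S | c ⬝ᵥ v x = 0} * Fintype.card K ≤ #S := by
  classical
  have hsum : ∑ c : ι → K, #{x ∈ S | c ⬝ᵥ v x = 0} * Fintype.card K = ∑ _c : ι → K, #S :=
    calc ∑ c : ι → K, #{x ∈ S | c ⬝ᵥ v x = 0} * Fintype.card K
        = ∑ x ∈ S, #{c : ι → K | c ⬝ᵥ v x = 0} * Fintype.card K := by
          simp only [← sum_mul, card_filter]
          rw [sum_comm]
      _ = ∑ _x ∈ S, Fintype.card K ^ Fintype.card ι :=
          sum_congr rfl fun x hx => card_filter_dotProduct_eq_zero_mul_card (hv x hx)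
      _ = ∑ _c : ι → K, #S := by simp [mul_comm]
  obtain ⟨c, -, hc⟩ := exists_le_of_sum_le univ_nonempty hsum.le
  exact ⟨c, hc⟩

lemma exists_card_filter_forall_dotProduct_eq_zero_mul_pow_le [DecidableEq K] (S : Finset α)
    (v : α → ι → K) (hv : ∀ x ∈ S, v x ≠ 0) (m : ℕ) :
    ∃ c : Fin m → ι → K, #{x ∈ S | ∀ i, c i ⬝ᵥ v x = 0} * Fintype.card K ^ m ≤ #S := by
  induction m with
  | zero => exact ⟨finZeroElim, by simp⟩
  | succ m ih =>
    obtain ⟨c, hc⟩ := ih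
    obtain ⟨c₀, hc₀⟩ := exists_card_filter_dotProduct_eq_zero_mul_card_le
      {x ∈ S | ∀ i, c i ⬝ᵥ v x = 0} v fun x hx => hv x (mem_filter.mp hx).1
    refine ⟨Fin.cons c₀ c, ?_⟩
    rw [filter_filter] at hc₀
    simp only [Fin.forall_fin_succ, Fin.cons_zero, Fin.cons_succ, and_comm (a := c₀ ⬝ᵥ _ = 0)]
    calc #{x ∈ S | (∀ i, c i ⬝ᵥ v x = 0) ∧ c₀ ⬝ᵥ v x = 0} * Fintype.card K ^ (m + 1)
        = #{x ∈ S | (∀ i, c i ⬝ᵥ v x = 0) ∧ c₀ ⬝ᵥ v x = 0} * Fintype.card K *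
            Fintype.card K ^ m := by ring
      _ ≤ #{x ∈ S | ∀ i, c i ⬝ᵥ v x = 0} * Fintype.card K ^ m := Nat.mul_le_mul_right _ hc₀
      _ ≤ #S := hc

lemma exists_forall_dotProduct_eq_zero_imp_eq_zero [Fintype α] (v : α → ι → K) {m : ℕ}
    (hcard : Fintype.card α ≤ Fintype.card K ^ m) (hv : ∃ x₀, v x₀ = 0) :
    ∃ c : Fin m → ι → K, ∀ x, (∀ i, c i ⬝ᵥ v x = 0) → v x = 0 := by
  classical
  set S : Finset α := {x | v x ≠ 0}
  have hS : #S < Fintype.card K ^ m := by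
    obtain ⟨x₀, hx₀⟩ := hv
    refine lt_of_lt_of_le (card_lt_univ_of_notMem (x := x₀) ?_) hcard
    simp [S, hx₀]
  obtain ⟨c, hc⟩ := exists_card_filter_forall_dotProduct_eq_zero_mul_pow_le S v
    (fun x hx => (mem_filter.mp hx).2) m
  have hempty : {x ∈ S | ∀ i, c i ⬝ᵥ v x = 0} = ∅ := by
    rw [← card_eq_zero, ← Nat.lt_one_iff]
    exact lt_of_mul_lt_mul_right (by simpa using hc.trans_lt hS) (Nat.zero_le _)
  exact ⟨c, fun x hx => not_not.mp fun hx₀ =>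
    filter_eq_empty_iff.mp hempty (by simpa [S] using hx₀) hx⟩

end DotProductAveraging

lemma MvPolynomial.eval_sum_smul {σ ι R : Type*} [CommSemiring R] [Fintype ι]
    (x : σ → R) (c : ι → R) (f : ι → MvPolynomial σ R) :
    eval x (∑ t, c t • f t) = c ⬝ᵥ fun t => eval x (f t) := by
  simp [dotProduct, smul_eval]

theorem stmt_11_general {F : Type*} [Field F] [Fintype F] (n : ℕ)
    (k : ℕ) (f : Fin k → MvPolynomial (Fin n) F)
    (hf : ∀ i, (f i).IsHomogeneous 2) :
    ∃ g : Fin n → MvPolynomial (Fin n) F,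
      (∀ i, g i ∈ Submodule.span F (Set.range f)) ∧
      (∀ i, (g i).IsHomogeneous 2) ∧
        {x : Fin n → F | ∀ i, MvPolynomial.eval x (g i) = 0} =
          {x : Fin n → F | ∀ i, MvPolynomial.eval x (f i) = 0} := by
  have hf0 : ∀ t, eval 0 (f t) = 0 := fun t => by
    rw [eval_zero]
    exact (hf t).coeff_eq_zero (by simp)
  obtain ⟨c, hc⟩ := exists_forall_dotProduct_eq_zero_imp_eq_zero (m := n)
    (fun x t => eval x (f t)) (by simp) ⟨0, funext hf0⟩
  have hspan : Submodule.span F (Set.range f) ≤ homogeneousSubmodule (Fin n) F 2 :=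
    Submodule.span_le.mpr <| Set.range_subset_iff.mpr hf
  have hg : ∀ i, ∑ t, c i t • f t ∈ Submodule.span F (Set.range f) := fun i =>
    (Submodule.mem_span_range_iff_exists_fun F).mpr ⟨c i, rfl⟩
  refine ⟨fun i => ∑ t, c i t • f t, hg, fun i => hspan (hg i), ?_⟩
  ext x
  simp only [Set.mem_ofPred_eq, eval_sum_smul]
  exact ⟨fun h => congrFun (hc x h), fun h i => by simp [h]⟩

theorem stmt_11 {F : Type*} [Field F] [Fintype F] (n : ℕ) (hn : 0 < n)
    (k : ℕ) (hk : n < k) (f : Fin k → MvPolynomial (Fin n) F)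
    (hf : ∀ i, (f i).IsHomogeneous 2) :
    ∃ g : Fin n → MvPolynomial (Fin n) F,
      (∀ i, g i ∈ Submodule.span F (Set.range f)) ∧
      (∀ i, (g i).IsHomogeneous 2) ∧
        {x : Fin n → F | ∀ i, MvPolynomial.eval x (g i) = 0} =
          {x : Fin n → F | ∀ i, MvPolynomial.eval x (f i) = 0} :=
  stmt_11_general n k f hf
end

section
/- Let f₁, …, f_k be polynomials in n variables over F_q with k > n. Then there exist g₁, …, g_n, each an F_q-linear combination of f₁, …, f_k (in particular, of total degree at most max_i deg f_i), whose common zero set in F_q^n equals the common zero set of f₁, …, f_k. -/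
open MvPolynomial Matrix Finset

theorem AddMonoidHom.card_ker_mul_card_of_surjective {G H : Type*} [AddGroup G] [AddGroup H]
    (φ : G →+ H) (hφ : Function.Surjective φ) :
    Nat.card φ.ker * Nat.card H = Nat.card G := by
  rw [← Nat.card_congr (QuotientAddGroup.quotientKerEquivOfSurjective φ hφ).toEquiv]
  exact φ.ker.card_mul_index

namespace Matrix

variable {F ι κ : Type*} [Field F] [Fintype κ] [DecidableEq κ]

theorem mulVec_surjective_left {v : κ → F} (hv : v ≠ 0) :
    Function.Surjective fun C : Matrix ι κ F => C *ᵥ v := by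
  obtain ⟨j, hj⟩ := Function.ne_iff.mp hv
  intro w
  refine ⟨vecMulVec w (Pi.single j (v j)⁻¹), ?_⟩
  simp only [vecMulVec_mulVec, single_dotProduct, inv_mul_cancel₀ hj, MulOpposite.op_one,
    one_smul]

variable [Fintype F] [Fintype ι] [DecidableEq ι]

theorem card_filter_mulVec_eq_zero_mul [DecidableEq F] {v : κ → F} (hv : v ≠ 0) :
    #{C : Matrix ι κ F | C *ᵥ v = 0} * Fintype.card F ^ Fintype.card ι =
      Fintype.card F ^ (Fintype.card ι * Fintype.card κ) := by
  have hker := (mulVec.addMonoidHomLeft (m := ι) v).card_ker_mul_card_of_surjective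
    (mulVec_surjective_left hv)
  have hker_card : Nat.card (mulVec.addMonoidHomLeft (m := ι) v).ker =
      #{C : Matrix ι κ F | C *ᵥ v = 0} := by
    rw [← Fintype.card_subtype, ← Nat.card_eq_fintype_card]
    rfl
  rw [← hker_card]
  simpa [Matrix, pow_mul'] using hker

theorem exists_mulVec_ne_zero_of_card_le [Nonempty ι] {S : Finset (κ → F)} (hS : 0 ∉ S)
    (hcard : #S ≤ Fintype.card F ^ Fintype.card ι) :
    ∃ C : Matrix ι κ F, ∀ v ∈ S, C *ᵥ v ≠ 0 := by
  classical
  by_contra! hkill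
  set Q := Fintype.card F ^ Fintype.card ι
  set N := Fintype.card F ^ (Fintype.card ι * Fintype.card κ)
  have hN : #(univ : Finset (Matrix ι κ F)) = N := by
    rw [card_univ, ← Nat.card_eq_fintype_card]
    simp [N, Matrix, pow_mul']
  have hdouble : (∑ C : Matrix ι κ F, #{v ∈ S | C *ᵥ v = 0}) * Q = #S * N := by
    have := sum_card_bipartiteAbove_eq_sum_card_bipartiteBelow
      (s := univ) (t := S) (r := fun (C : Matrix ι κ F) v => C *ᵥ v = 0)
    simp only [bipartiteAbove, bipartiteBelow] at this
    rw [this, sum_mul, sum_const_nat]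
    intro v hv
    exact card_filter_mulVec_eq_zero_mul (ne_of_mem_of_not_mem hv hS)
  have hkill_pos (C : Matrix ι κ F) : 1 ≤ #{v ∈ S | C *ᵥ v = 0} := by
    obtain ⟨v, hv, hCv⟩ := hkill C
    exact card_pos.mpr ⟨v, mem_filter.mpr ⟨hv, hCv⟩⟩
  have hlower : N ≤ ∑ C : Matrix ι κ F, #{v ∈ S | C *ᵥ v = 0} := by
    rw [← hN, card_eq_sum_ones]
    exact sum_le_sum fun C _ => hkill_pos C
  have hzero : #S + N ≤ ∑ C : Matrix ι κ F, #{v ∈ S | C *ᵥ v = 0} + 1 := by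
    have hS0 : {v ∈ S | (0 : Matrix ι κ F) *ᵥ v = 0} = S :=
      filter_true_of_mem fun v _ => zero_mulVec v
    have hrest := sum_le_sum fun C (_ : C ∈ univ.erase 0) => hkill_pos C
    rw [sum_const, card_erase_of_mem (mem_univ _), hN, smul_eq_mul, mul_one] at hrest
    rw [← add_sum_erase _ _ (mem_univ 0), hS0]
    omega
  have hQ : 2 ≤ Q := Nat.one_lt_pow Fintype.card_ne_zero Fintype.one_lt_card
  have hupper : (∑ C : Matrix ι κ F, #{v ∈ S | C *ᵥ v = 0}) * Q ≤ N * Q := by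
    rw [hdouble, mul_comm N]
    exact Nat.mul_le_mul_right N hcard
  have hsum : ∑ C : Matrix ι κ F, #{v ∈ S | C *ᵥ v = 0} = N :=
    le_antisymm (Nat.le_of_mul_le_mul_right hupper (by omega)) hlower
  rw [hsum, mul_comm #S] at hdouble
  have hQS : Q = #S := Nat.eq_of_mul_eq_mul_left (by positivity) hdouble
  omega

end Matrix

theorem stmt_12_general {F : Type*} [Field F] [Fintype F] (n : ℕ) (hn : 0 < n)
    (k : ℕ) (f : Fin k → MvPolynomial (Fin n) F) :
    ∃ g : Fin n → MvPolynomial (Fin n) F,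
      (∀ i, g i ∈ Submodule.span F (Set.range f)) ∧
        {x : Fin n → F | ∀ i, MvPolynomial.eval x (g i) = 0} =
          {x : Fin n → F | ∀ i, MvPolynomial.eval x (f i) = 0} := by
  classical
  have : Nonempty (Fin n) := ⟨⟨0, hn⟩⟩
  let a : (Fin n → F) → Fin k → F := fun x j => eval x (f j)
  have hcard : #((univ.image a).erase 0) ≤ Fintype.card F ^ Fintype.card (Fin n) := by
    refine card_erase_le.trans (card_image_le.trans ?_)
    simp
  obtain ⟨C, hC⟩ := exists_mulVec_ne_zero_of_card_le (notMem_erase 0 _) hcard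
  have heval (x : Fin n → F) (i : Fin n) : eval x (∑ j, C i j • f j) = (C *ᵥ a x) i := by
    simp [a, mulVec, dotProduct]
  have hspan (i : Fin n) : ∑ j, C i j • f j ∈ Submodule.span F (Set.range f) :=
    Submodule.sum_mem _ fun j _ => Submodule.smul_mem _ _ (Submodule.subset_span ⟨j, rfl⟩)
  refine ⟨fun i => ∑ j, C i j • f j, hspan, ?_⟩
  ext x
  have hkernel : C *ᵥ a x = 0 ↔ a x = 0 :=
    ⟨fun h => by_contra fun hx => hC _ (mem_erase.2 ⟨hx, mem_image_of_mem _ (mem_univ x)⟩) h,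
      fun h => by rw [h, mulVec_zero]⟩
  simpa [heval, funext_iff] using hkernel

theorem stmt_12 {F : Type*} [Field F] [Fintype F] (n : ℕ) (hn : 0 < n)
    (k : ℕ) (hk : n < k) (f : Fin k → MvPolynomial (Fin n) F) :
    ∃ g : Fin n → MvPolynomial (Fin n) F,
      (∀ i, g i ∈ Submodule.span F (Set.range f)) ∧
        {x : Fin n → F | ∀ i, MvPolynomial.eval x (g i) = 0} =
          {x : Fin n → F | ∀ i, MvPolynomial.eval x (f i) = 0} :=
  stmt_12_general n hn k f
end

section
/- Any nonempty projective algebraic set in P^n(F_q) defined by a finite system of homogeneous forms (of any fixed degree d) can be defined by at most n forms of the same degree d, each an F_q-linear combination of the original forms. -/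
lemma aux_card_dotzero {F : Type*} [Field F] [Fintype F] [DecidableEq F] {k : ℕ}
    (w : Fin k → F) (hw : w ≠ 0) :
    (Finset.univ.filter (fun c : Fin k → F => ∑ i, c i * w i = 0)).card
      = Fintype.card F ^ (k - 1) := by
  classical
  let L : (Fin k → F) →ₗ[F] F :=
    { toFun := fun c => ∑ i, c i * w i
      map_add' := by intro a b; simp [add_mul, Finset.sum_add_distrib]
      map_smul' := by intro m a; simp [Finset.mul_sum, mul_assoc] }
  obtain ⟨i₀, hi₀'⟩ := Function.ne_iff.mp hw
  have hi₀ : w i₀ ≠ 0 := by simpa using hi₀'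
  have hsurj : Function.Surjective L := by
    intro a
    refine ⟨Pi.single i₀ (a * (w i₀)⁻¹), ?_⟩
    simp only [L, LinearMap.coe_mk, AddHom.coe_mk]
    rw [Finset.sum_eq_single i₀]
    · simp [mul_assoc, inv_mul_cancel₀ hi₀]
    · intro b _ hb; simp [Pi.single_eq_of_ne hb]
    · simp
  have hrank : Module.finrank F (LinearMap.ker L) = k - 1 := by
    have h1 := LinearMap.finrank_range_add_finrank_ker L
    rw [LinearMap.range_eq_top.mpr hsurj, finrank_top, Module.finrank_self,
      Module.finrank_fin_fun] at h1
    omega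
  haveI : Fintype (LinearMap.ker L) := Fintype.ofFinite _
  have hcard : Fintype.card (LinearMap.ker L) = Fintype.card F ^ (k - 1) := by
    rw [Module.card_eq_pow_finrank (K := F), hrank]
  rw [← Fintype.card_subtype, ← hcard]
  exact Fintype.card_congr (Equiv.subtypeEquivRight (fun c => Iff.rfl))

lemma aux_step {F : Type*} [Field F] [Fintype F] [DecidableEq F] {k : ℕ} (hk : 0 < k)
    {α : Type*} [DecidableEq α] (T : Finset α) (w : α → Fin k → F)
    (hw : ∀ P ∈ T, w P ≠ 0) (hT : T.Nonempty) :
    ∃ c : Fin k → F,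
      Fintype.card F * (T.filter (fun P => ∑ i, c i * w P i = 0)).card < T.card := by
  classical
  set q := Fintype.card F with hqdef
  have hq : 2 ≤ q := Fintype.one_lt_card
  set C : Finset (Fin k → F) := Finset.univ.filter (fun c => c ≠ 0) with hC
  have hA1 : 1 ≤ q ^ (k - 1) := Nat.one_le_pow _ _ (by omega)
  have hqk : q ^ k = q ^ (k - 1) * q := by
    rw [← pow_succ]; congr 1; omega
  have hCcard : C.card + 1 = q ^ k := by
    rw [hC, Finset.filter_ne', Finset.card_erase_of_mem (Finset.mem_univ _),
      Finset.card_univ, Fintype.card_fun, Fintype.card_fin, ← hqdef]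
    have : 0 < q ^ k := Nat.one_le_pow _ _ (by omega)
    omega
  have hpt : ∀ P ∈ T, (C.filter (fun c => ∑ i, c i * w P i = 0)).card + 1 = q ^ (k - 1) := by
    intro P hP
    have h0 : (Finset.univ.filter (fun c : Fin k → F => ∑ i, c i * w P i = 0)).card
        = q ^ (k - 1) := aux_card_dotzero (w P) (hw P hP)
    have he : C.filter (fun c => ∑ i, c i * w P i = 0)
        = (Finset.univ.filter (fun c : Fin k → F => ∑ i, c i * w P i = 0)).erase 0 := by
      ext c
      simp only [hC, Finset.mem_filter, Finset.mem_erase, Finset.mem_univ, true_and]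
    have hm : (0 : Fin k → F) ∈ Finset.univ.filter
        (fun c : Fin k → F => ∑ i, c i * w P i = 0) := by simp
    rw [he, Finset.card_erase_of_mem hm, h0]
    exact Nat.sub_add_cancel hA1
  have hsum : (∑ c ∈ C, (T.filter (fun P => ∑ i, c i * w P i = 0)).card) + T.card
      = T.card * q ^ (k - 1) := by
    have e1 : ∑ c ∈ C, (T.filter (fun P => ∑ i, c i * w P i = 0)).card
        = ∑ P ∈ T, (C.filter (fun c => ∑ i, c i * w P i = 0)).card := by
      simp_rw [Finset.card_filter]
      exact Finset.sum_comm
    calc (∑ c ∈ C, (T.filter (fun P => ∑ i, c i * w P i = 0)).card) + T.card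
        = ∑ P ∈ T, ((C.filter (fun c => ∑ i, c i * w P i = 0)).card + 1) := by
          rw [Finset.sum_add_distrib, Finset.sum_const, smul_eq_mul, mul_one, e1]
      _ = ∑ P ∈ T, q ^ (k - 1) := Finset.sum_congr rfl hpt
      _ = T.card * q ^ (k - 1) := by rw [Finset.sum_const, smul_eq_mul]
  have hCne : C.Nonempty := by
    refine ⟨fun _ => 1, ?_⟩
    simp only [hC, Finset.mem_filter, Finset.mem_univ, true_and]
    intro h
    exact one_ne_zero (congrFun h ⟨0, hk⟩)
  obtain ⟨c₀, hc₀C, hmin⟩ := Finset.exists_min_image C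
    (fun c => (T.filter (fun P => ∑ i, c i * w P i = 0)).card) hCne
  refine ⟨c₀, ?_⟩
  set r := (T.filter (fun P => ∑ i, c₀ i * w P i = 0)).card with hr
  have hbound : C.card * r ≤ ∑ c ∈ C, (T.filter (fun P => ∑ i, c i * w P i = 0)).card := by
    have := Finset.card_nsmul_le_sum C
      (fun c => (T.filter (fun P => ∑ i, c i * w P i = 0)).card) r hmin
    simpa [smul_eq_mul] using this
  have hrT : r ≤ T.card := Finset.card_filter_le _ _
  have hT1 : 1 ≤ T.card := hT.card_pos
  by_contra hcon
  push_neg at hcon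
  have key : C.card * r + T.card ≤ T.card * q ^ (k - 1) := by
    rw [← hsum]; exact Nat.add_le_add_right hbound _
  have h2 : q ^ (k - 1) * q * r + T.card ≤ T.card * q ^ (k - 1) + r := by
    have : (C.card + 1) * r + T.card ≤ T.card * q ^ (k - 1) + r := by nlinarith [key]
    rw [hCcard, hqk] at this; exact this
  have h3 : T.card * q ^ (k - 1) ≤ q * r * q ^ (k - 1) :=
    Nat.mul_le_mul_right _ hcon
  have hTr : T.card ≤ r := by nlinarith [h2, h3]
  have hrT' : r = T.card := le_antisymm hrT hTr
  nlinarith [key, hCcard, hqk, hA1, hq, hT1, hrT']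

lemma aux_proj_card {F V : Type*} [Field F] [Fintype F] [AddCommGroup V] [Module F V]
    [Fintype V] [Nontrivial V] :
    (Fintype.card F - 1) * Nat.card (Projectivization F V) + 1 = Fintype.card V := by
  classical
  haveI : Finite (Projectivization F V) := Quotient.finite _
  haveI : Fintype (Projectivization F V) := Fintype.ofFinite _
  set φ : {v : V // v ≠ 0} → Projectivization F V := fun v => Projectivization.mk F v.1 v.2
    with hφ
  haveI : ∀ P : Projectivization F V, Fintype {u : {v : V // v ≠ 0} // φ u = P} :=
    fun P => Fintype.ofFinite _
  have hfib : ∀ P : Projectivization F V,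
      Fintype.card {u : {v : V // v ≠ 0} // φ u = P} = Fintype.card Fˣ := by
    intro P
    have hb : Function.Bijective (fun a : Fˣ =>
        (⟨⟨(a : F) • P.rep, smul_ne_zero a.ne_zero P.rep_nonzero⟩, by
          show Projectivization.mk F ((a : F) • P.rep) _ = P
          conv_rhs => rw [← P.mk_rep]
          exact (Projectivization.mk_eq_mk_iff F _ _ _ P.rep_nonzero).mpr
            ⟨a, by rw [Units.smul_def]⟩⟩ :
          {u : {v : V // v ≠ 0} // φ u = P})) := by
      constructor
      · intro a b hab
        have h1 : (a : F) • P.rep = (b : F) • P.rep := congrArg (fun u => u.1.1) hab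
        exact Units.ext (smul_left_injective F P.rep_nonzero h1)
      · rintro ⟨⟨v, hv⟩, hP⟩
        have : Projectivization.mk F v hv = Projectivization.mk F P.rep P.rep_nonzero := by
          rw [P.mk_rep]; exact hP
        obtain ⟨a, ha⟩ := (Projectivization.mk_eq_mk_iff F _ _ hv P.rep_nonzero).mp this
        exact ⟨a, Subtype.ext (Subtype.ext (by simpa [Units.smul_def] using ha))⟩
    exact (Fintype.card_of_bijective hb).symm
  have e := Fintype.card_congr (Equiv.sigmaFiberEquiv φ).symm
  rw [Fintype.card_sigma] at e
  simp_rw [hfib] at e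
  rw [Finset.sum_const, smul_eq_mul, Finset.card_univ] at e
  have h1 : Fintype.card {v : V // v ≠ 0} + 1 = Fintype.card V := by
    rw [Fintype.card_subtype, Finset.filter_ne', Finset.card_erase_of_mem (Finset.mem_univ _),
      Finset.card_univ]
    have : 0 < Fintype.card V := Fintype.card_pos
    omega
  rw [Nat.card_eq_fintype_card, ← Fintype.card_units (α := F), ← h1, e, mul_comm]

lemma aux_geom (q : ℕ) (hq : 1 ≤ q) :
    ∀ m : ℕ, (q - 1) * (1 + ∑ t ∈ Finset.range m, q ^ (t + 1)) = q ^ (m + 1) - 1 := by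
  intro m
  induction m with
  | zero => simp
  | succ m ih =>
    rw [Finset.sum_range_succ, ← add_assoc, Nat.mul_add, ih]
    have e2 : (q - 1) * q ^ (m + 1) + q ^ (m + 1) = q * q ^ (m + 1) := by
      have h : q - 1 + 1 = q := Nat.succ_pred_eq_of_pos hq
      calc (q - 1) * q ^ (m + 1) + q ^ (m + 1) = (q - 1 + 1) * q ^ (m + 1) := by ring
        _ = q * q ^ (m + 1) := by rw [h]
    have h1 : 1 ≤ q ^ (m + 1) := Nat.one_le_pow _ _ (by omega)
    have h2 : q ^ (m + 1 + 1) = q * q ^ (m + 1) := by rw [pow_succ, mul_comm]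
    omega

lemma aux_shift (q : ℕ) (m : ℕ) :
    ∑ t ∈ Finset.range (m + 1), q ^ (t + 1) = q * (1 + ∑ t ∈ Finset.range m, q ^ (t + 1)) := by
  rw [Finset.sum_range_succ' (fun t => q ^ (t + 1)), Nat.mul_add, mul_one, Finset.mul_sum]
  have : ∀ t, q ^ (t + 1 + 1) = q * q ^ (t + 1) := fun t => by rw [pow_succ, mul_comm]
  simp_rw [this, zero_add, pow_one]
  omega

theorem stmt_15 {F : Type*} [Field F] [Fintype F] (n d k : ℕ)
    (hn : 0 < n) (hd : 0 < d) (hk : n < k)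
    (f : Fin k → MvPolynomial (Fin (n + 1)) F)
    (hf : ∀ i, (f i).IsHomogeneous d)
    (hne : ∃ P : Projectivization F (Fin (n + 1) → F),
      ∀ i, MvPolynomial.eval P.rep (f i) = 0) :
    ∃ g : Fin n → MvPolynomial (Fin (n + 1)) F,
      (∀ i, g i ∈ Submodule.span F (Set.range f)) ∧
      (∀ i, (g i).IsHomogeneous d) ∧
        {P : Projectivization F (Fin (n + 1) → F) |
            ∀ i, MvPolynomial.eval P.rep (g i) = 0} =
          {P : Projectivization F (Fin (n + 1) → F) |
            ∀ i, MvPolynomial.eval P.rep (f i) = 0} := by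
  classical
  obtain ⟨P₀, hP₀⟩ := hne
  set q := Fintype.card F with hqdef
  have hq2 : 2 ≤ q := Fintype.one_lt_card
  haveI : Finite (Projectivization F (Fin (n + 1) → F)) := Quotient.finite _
  haveI : Fintype (Projectivization F (Fin (n + 1) → F)) := Fintype.ofFinite _
  set ev : Projectivization F (Fin (n + 1) → F) → Fin k → F :=
    fun P i => MvPolynomial.eval P.rep (f i) with hev
  set S : Finset (Projectivization F (Fin (n + 1) → F)) :=
    Finset.univ.filter (fun P => ev P ≠ 0) with hS
  -- cardinality of the projective space
  have hcardV : Fintype.card (Fin (n + 1) → F) = q ^ (n + 1) := by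
    rw [Fintype.card_fun, Fintype.card_fin, ← hqdef]
  have hproj := aux_proj_card (F := F) (V := Fin (n + 1) → F)
  rw [hcardV, ← hqdef] at hproj
  have hgeom := aux_geom q (by omega) n
  have hcardP : Fintype.card (Projectivization F (Fin (n + 1) → F))
      = 1 + ∑ t ∈ Finset.range n, q ^ (t + 1) := by
    have h1 : 1 ≤ q ^ (n + 1) := Nat.one_le_pow _ _ (by omega)
    have h2 : (q - 1) * Nat.card (Projectivization F (Fin (n + 1) → F))
        = (q - 1) * (1 + ∑ t ∈ Finset.range n, q ^ (t + 1)) := by omega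
    have h3 := Nat.eq_of_mul_eq_mul_left (by omega : 0 < q - 1) h2
    rw [← Nat.card_eq_fintype_card]
    exact h3
  -- S has at most q + q^2 + ... + q^n elements
  have hP₀S : P₀ ∉ S := by
    simp only [hS, Finset.mem_filter, Finset.mem_univ, true_and, not_not]
    funext i
    exact hP₀ i
  have hScard : S.card ≤ ∑ t ∈ Finset.range n, q ^ (t + 1) := by
    have hsub : S ⊆ Finset.univ.erase P₀ := by
      intro P hP
      refine Finset.mem_erase.mpr ⟨?_, Finset.mem_univ _⟩
      rintro rfl; exact hP₀S hP
    have := Finset.card_le_card hsub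
    rw [Finset.card_erase_of_mem (Finset.mem_univ _), Finset.card_univ, hcardP] at this
    omega
  -- greedy construction
  have key : ∀ j : ℕ, j ≤ n → ∃ c : Fin j → Fin k → F,
      (S.filter (fun P => ∀ m : Fin j, ∑ i, c m i * ev P i = 0)).card
        ≤ ∑ t ∈ Finset.range (n - j), q ^ (t + 1) := by
    intro j
    induction j with
    | zero =>
      intro _
      refine ⟨fun m => 0, ?_⟩
      have he : S.filter (fun P => ∀ m : Fin 0, ∑ i, (0 : Fin k → F) i * ev P i = 0) = S :=
        Finset.filter_true_of_mem (fun P _ => fun m => Fin.elim0 m)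
      rw [he, Nat.sub_zero]
      exact hScard
    | succ j ih =>
      intro hj
      obtain ⟨c, hc⟩ := ih (by omega)
      set T := S.filter (fun P => ∀ m : Fin j, ∑ i, c m i * ev P i = 0) with hT
      have hsubS : T ⊆ S := Finset.filter_subset _ _
      by_cases hTe : T.Nonempty
      · have hw : ∀ P ∈ T, ev P ≠ 0 := by
          intro P hP
          have := hsubS hP
          rw [hS, Finset.mem_filter] at this
          exact this.2
        obtain ⟨c', hc'⟩ := aux_step (k := k) (by omega) T ev hw hTe
        set c2 : Fin (j + 1) → Fin k → F := Fin.snoc c c' with hc2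
        refine ⟨c2, ?_⟩
        have hsub2 : S.filter (fun P => ∀ m : Fin (j + 1), ∑ i, c2 m i * ev P i = 0)
            ⊆ T.filter (fun P => ∑ i, c' i * ev P i = 0) := by
          intro P hP
          rw [Finset.mem_filter] at hP
          obtain ⟨hPS, hPall⟩ := hP
          rw [Finset.mem_filter]
          refine ⟨?_, ?_⟩
          · rw [hT, Finset.mem_filter]
            refine ⟨hPS, fun m => ?_⟩
            have := hPall m.castSucc
            simpa [hc2, Fin.snoc_castSucc] using this
          · have := hPall (Fin.last j)
            simpa [hc2, Fin.snoc_last] using this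
        have hle := Finset.card_le_card hsub2
        have hTle : T.card ≤ ∑ t ∈ Finset.range (n - j), q ^ (t + 1) := hc
        have hnj : n - j = (n - (j + 1)) + 1 := by omega
        rw [hnj, aux_shift] at hTle
        have hlt : q * (T.filter (fun P => ∑ i, c' i * ev P i = 0)).card
            < q * (1 + ∑ t ∈ Finset.range (n - (j + 1)), q ^ (t + 1)) :=
          lt_of_lt_of_le hc' hTle
        have := Nat.lt_of_mul_lt_mul_left hlt
        omega
      · set c2 : Fin (j + 1) → Fin k → F := Fin.snoc c 0 with hc2
        refine ⟨c2, ?_⟩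
        have hsub2 : S.filter (fun P => ∀ m : Fin (j + 1), ∑ i, c2 m i * ev P i = 0)
            ⊆ T := by
          intro P hP
          rw [Finset.mem_filter] at hP
          obtain ⟨hPS, hPall⟩ := hP
          rw [hT, Finset.mem_filter]
          refine ⟨hPS, fun m => ?_⟩
          have := hPall m.castSucc
          simpa [hc2, Fin.snoc_castSucc] using this
        have h0 : T.card = 0 := by
          rw [Finset.card_eq_zero]
          exact Finset.not_nonempty_iff_eq_empty.mp hTe
        have := Finset.card_le_card hsub2
        omega
  obtain ⟨c, hc⟩ := key n le_rfl
  rw [Nat.sub_self, Finset.range_zero, Finset.sum_empty, Nat.le_zero,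
    Finset.card_eq_zero] at hc
  refine ⟨fun m => ∑ i, c m i • f i, ?_, ?_, ?_⟩
  · intro m
    exact Submodule.sum_mem _ fun i _ =>
      Submodule.smul_mem _ _ (Submodule.subset_span ⟨i, rfl⟩)
  · intro m
    have : (∑ i, c m i • f i) ∈ MvPolynomial.homogeneousSubmodule (Fin (n + 1)) F d :=
      Submodule.sum_mem _ fun i _ => Submodule.smul_mem _ _
        ((MvPolynomial.mem_homogeneousSubmodule d (f i)).mpr (hf i))
    exact (MvPolynomial.mem_homogeneousSubmodule _ _).mp this
  · have heval : ∀ (m : Fin n) (P : Projectivization F (Fin (n + 1) → F)),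
        MvPolynomial.eval P.rep (∑ i, c m i • f i) = ∑ i, c m i * ev P i := by
      intro m P
      rw [map_sum]
      exact Finset.sum_congr rfl fun i _ => MvPolynomial.smul_eval _ _ _
    ext P
    simp only [Set.mem_setOf_eq]
    constructor
    · intro h i
      by_contra hne0
      have hPS : P ∈ S := by
        rw [hS, Finset.mem_filter]
        refine ⟨Finset.mem_univ _, fun h0 => hne0 ?_⟩
        have := congrFun h0 i
        simpa [hev] using this
      have hPfil : P ∈ S.filter (fun P => ∀ m : Fin n, ∑ i, c m i * ev P i = 0) := by
        rw [Finset.mem_filter]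
        exact ⟨hPS, fun m => by rw [← heval m P]; exact h m⟩
      rw [hc] at hPfil
      exact absurd hPfil (Finset.notMem_empty _)
    · intro h m
      rw [heval m P]
      refine Finset.sum_eq_zero fun i _ => ?_
      have : ev P i = 0 := h i
      rw [this, mul_zero]
end
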